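/- For every formula φ of basic multi-agent modal logic, the formula [↑]φ (after all arrow update models, φ) is equivalent to [⊗]φ (after all action models, φ): M,s ⊨ [↑]φ iff M,s ⊨ [⊗]φ for every pointed relational model (M,s). -/

import Mathlib

namespace AAUML

/-- Formulas of arbitrary arrow update model logic over atoms `P` and agents `A`.
An arrow update model is encoded as a finite list of arrows
`(agent, source outcome, source condition, target outcome, target condition)`,
with outcomes drawn from `ℕ`; `upd U o φ` is `[U,o]φ` and `all φ` is `[↑]φ`. -/
inductive Form (P A : Type) : Type where
  | atom : P → Form P A
  | neg  : Form P A → Form P A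
  | and  : Form P A → Form P A → Form P A
  | box  : A → Form P A → Form P A
  | upd  : List (A × ℕ × Form P A × ℕ × Form P A) → ℕ → Form P A → Form P A
  | all  : Form P A → Form P A

/-- An arrow: agent, source outcome, source condition, target outcome, target condition. -/
abbrev Arrow (P A : Type) := A × ℕ × Form P A × ℕ × Form P A

/-- Formulas of basic multi-agent modal logic: no update modality, no quantifier. -/
inductive Form.Modal {P A : Type} : Form P A → Prop
  | atom (p : P) : Form.Modal (.atom p)
  | neg {φ : Form P A} : Form.Modal φ → Form.Modal (.neg φ)
  | and {φ ψ : Form P A} : Form.Modal φ → Form.Modal ψ → Form.Modal (.and φ ψ)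
  | box (a : A) {φ : Form P A} : Form.Modal φ → Form.Modal (.box a φ)

/-- Formulas of arrow update model logic (no arbitrary-update quantifier anywhere,
including inside the conditions of arrow update models). -/
inductive Form.NoQuant {P A : Type} : Form P A → Prop
  | atom (p : P) : Form.NoQuant (.atom p)
  | neg {φ : Form P A} : Form.NoQuant φ → Form.NoQuant (.neg φ)
  | and {φ ψ : Form P A} : Form.NoQuant φ → Form.NoQuant ψ → Form.NoQuant (.and φ ψ)
  | box (a : A) {φ : Form P A} : Form.NoQuant φ → Form.NoQuant (.box a φ)
  | upd {U : List (Arrow P A)} (o : ℕ) {φ : Form P A} : Form.NoQuant φ →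
      (∀ ar ∈ U, Form.NoQuant ar.2.2.1) → (∀ ar ∈ U, Form.NoQuant ar.2.2.2.2) →
      Form.NoQuant (.upd U o φ)

/-- Propositional formulas (no modalities at all). -/
inductive Form.Prp {P A : Type} : Form P A → Prop
  | atom (p : P) : Form.Prp (.atom p)
  | neg {φ : Form P A} : Form.Prp φ → Form.Prp (.neg φ)
  | and {φ ψ : Form P A} : Form.Prp φ → Form.Prp ψ → Form.Prp (.and φ ψ)

/-- A relational (Kripke) model. -/
structure KModel (P A : Type) : Type 1 where
  World : Type
  R : A → World → World → Prop
  V : World → P → Prop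

variable {P A : Type}

/-- Satisfaction for basic modal formulas (junk value `False` on updates/quantifiers;
only used on modal formulas). -/
def msat (M : KModel P A) : M.World → Form P A → Prop
  | s, .atom p => M.V s p
  | s, .neg φ => ¬ msat M s φ
  | s, .and φ ψ => msat M s φ ∧ msat M s ψ
  | s, .box a φ => ∀ t, M.R a s t → msat M t φ
  | _, .upd _ _ _ => False
  | _, .all _ => False

/-- Some arrow of `U` for agent `a` from outcome `o` to outcome `o'` has its (modal)
source condition true at `s` and its target condition true at `s'`. -/
def marrowOK (M : KModel P A) (U : List (Arrow P A)) (a : A) (o o' : ℕ)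
    (s s' : M.World) : Prop :=
  ∃ ψ ψ', (a, o, ψ, o', ψ') ∈ U ∧ msat M s ψ ∧ msat M s' ψ'

/-- All source and target conditions of `U` are basic modal formulas. -/
def ModalArrows (U : List (Arrow P A)) : Prop :=
  ∀ ar ∈ U, Form.Modal ar.2.2.1 ∧ Form.Modal ar.2.2.2.2

mutual
  /-- Satisfaction `M,s ⊨ φ`.  The case `upd U o φ` is interpreted in the product
  model `M*U` (inlined); `all φ` quantifies over all arrow update models with basic
  modal source and target conditions. -/
  def Form.sat : (M : KModel P A) → M.World → Form P A → Prop
    | M, s, .atom p => M.V s p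
    | M, s, .neg φ => ¬ Form.sat M s φ
    | M, s, .and φ ψ => Form.sat M s φ ∧ Form.sat M s ψ
    | M, s, .box a φ => ∀ t, M.R a s t → Form.sat M t φ
    | M, s, .upd U o φ =>
        Form.sat ⟨M.World × ℕ,
          fun a x y => M.R a x.1 y.1 ∧ satList M U a x.2 y.2 x.1 y.1,
          fun x p => M.V x.1 p⟩ (s, o) φ
    | M, s, .all φ => ∀ (U : List (Arrow P A)) (o : ℕ), ModalArrows U →
        Form.sat ⟨M.World × ℕ,
          fun a x y => M.R a x.1 y.1 ∧ marrowOK M U a x.2 y.2 x.1 y.1,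
          fun x p => M.V x.1 p⟩ (s, o) φ
  termination_by M s φ => sizeOf φ

  /-- Some arrow of the list, for agent `a`, from `o` to `o'`, has its source condition
  true at `s` and its target condition true at `s'`. -/
  def satList : (M : KModel P A) → List (Arrow P A) → A → ℕ → ℕ → M.World → M.World → Prop
    | _, [], _, _, _, _, _ => False
    | M, (b, o1, ψ, o2, ψ') :: rest, a, o, o', s, s' =>
        (b = a ∧ o1 = o ∧ o2 = o' ∧ Form.sat M s ψ ∧ Form.sat M s' ψ') ∨
        satList M rest a o o' s s'
  termination_by M U a o o' s s' => sizeOf U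
end

/-- The product `M*U` of a relational model and an arrow update model. -/
def prodModel (M : KModel P A) (U : List (Arrow P A)) : KModel P A :=
  ⟨M.World × ℕ,
   fun a x y => M.R a x.1 y.1 ∧ satList M U a x.2 y.2 x.1 y.1,
   fun x p => M.V x.1 p⟩

def Valid (φ : Form P A) : Prop := ∀ (M : KModel P A) (s : M.World), Form.sat M s φ

def Form.or (φ ψ : Form P A) : Form P A := .neg (.and (.neg φ) (.neg ψ))
def Form.imp (φ ψ : Form P A) : Form P A := .neg (.and φ (.neg ψ))
def Form.dia (a : A) (φ : Form P A) : Form P A := .neg (.box a (.neg φ))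
/-- `⟨U,o⟩φ` -/
def Form.diaUpd (U : List (Arrow P A)) (o : ℕ) (φ : Form P A) : Form P A :=
  .neg (.upd U o (.neg φ))
/-- `⟨↑⟩φ` -/
def Form.ex (φ : Form P A) : Form P A := .neg (.all (.neg φ))
/-- A canonical tautology. -/
def Form.top [Inhabited P] : Form P A := .neg (.and (.atom default) (.neg (.atom default)))
/-- Finite conjunction. -/
def Form.conj [Inhabited P] : List (Form P A) → Form P A
  | [] => Form.top
  | φ :: rest => .and φ (Form.conj rest)

/-- `Z` is a bisimulation between `M` and `N`. -/
def IsBisim (M N : KModel P A) (Z : M.World → N.World → Prop) : Prop :=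
  ∀ s s', Z s s' →
    (∀ p, M.V s p ↔ N.V s' p) ∧
    (∀ a t, M.R a s t → ∃ t', N.R a s' t' ∧ Z t t') ∧
    (∀ a t', N.R a s' t' → ∃ t, M.R a s t ∧ Z t t')

/-- Bisimilarity of pointed models. -/
def Bisimilar (M : KModel P A) (s : M.World) (N : KModel P A) (s' : N.World) : Prop :=
  ∃ Z, IsBisim M N Z ∧ Z s s'

/-- An action model: actions with accessibility relations and preconditions. -/
structure AModel (P A : Type) : Type 1 where
  Action : Type
  rel : A → Action → Action → Prop
  pre : Action → Form P A

/-- The restricted modal product `M ⊗ E`. -/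
def actProd (M : KModel P A) (E : AModel P A) : KModel P A :=
  ⟨{x : M.World × E.Action // Form.sat M x.1 (E.pre x.2)},
   fun a x y => M.R a x.1.1 y.1.1 ∧ E.rel a x.1.2 y.1.2,
   fun x p => M.V x.1.1 p⟩

/-- `M,s ⊨ [E,e]φ`: if the precondition of `e` holds at `s` then `φ` holds at `(s,e)`
in `M ⊗ E`. -/
def actSat (M : KModel P A) (E : AModel P A) (s : M.World) (e : E.Action)
    (φ : Form P A) : Prop :=
  ∀ h : Form.sat M s (E.pre e), Form.sat (actProd M E) ⟨(s, e), h⟩ φ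


/-!
Both quantifiers range over classes of updates that produce the same pointed models up to
bisimulation, and basic modal formulas are bisimulation invariant. A finite action model
`(E, e)` becomes an arrow update model whose outcomes are (codes of) actions, with an arrow
`pre e₁ → pre e₂` for each edge `e₁ →ₐ e₂`; only the finitely many agents of `φ` matter.
Conversely an arrow update model `(U, o)` becomes the action model whose actions pair an
outcome with a truth assignment to the conditions of `U`, the precondition forcing that
assignment to be the actual one at the world.
-/

section Bisimulation

def IsBisimOn (S : Set A) (M N : KModel P A) (Z : M.World → N.World → Prop) : Prop :=
  ∀ s s', Z s s' →
    (∀ p, M.V s p ↔ N.V s' p) ∧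
    (∀ a ∈ S, ∀ t, M.R a s t → ∃ t', N.R a s' t' ∧ Z t t') ∧
    (∀ a ∈ S, ∀ t', N.R a s' t' → ∃ t, M.R a s t ∧ Z t t')

def Form.boxAgents : Form P A → List A
  | .atom _ => []
  | .neg φ => φ.boxAgents
  | .and φ ψ => φ.boxAgents ++ ψ.boxAgents
  | .box a φ => a :: φ.boxAgents
  | .upd _ _ _ => []
  | .all _ => []

theorem Form.Modal.sat_iff_of_isBisimOn {S : Set A} {M N : KModel P A}
    {Z : M.World → N.World → Prop} (hZ : IsBisimOn S M N Z) {φ : Form P A} (hφ : φ.Modal)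
    (hS : ∀ a ∈ φ.boxAgents, a ∈ S) {s : M.World} {s' : N.World} (hss' : Z s s') :
    Form.sat M s φ ↔ Form.sat N s' φ := by
  induction hφ generalizing s s' with
  | atom p => simpa only [Form.sat] using (hZ s s' hss').1 p
  | neg _ ih =>
    simp only [Form.sat]
    exact not_congr (ih hS hss')
  | and _ _ ih₁ ih₂ =>
    simp only [Form.boxAgents, List.mem_append] at hS
    simp only [Form.sat]
    exact and_congr (ih₁ (fun a ha => hS a (.inl ha)) hss')
      (ih₂ (fun a ha => hS a (.inr ha)) hss')
  | box a _ ih =>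
    simp only [Form.boxAgents, List.mem_cons] at hS
    have ha : a ∈ S := hS a (.inl rfl)
    have ih' {t : M.World} {t' : N.World} := @ih (fun b hb => hS b (.inr hb)) t t'
    simp only [Form.sat]
    constructor
    · intro H t' ht'
      obtain ⟨t, ht, hZt⟩ := (hZ s s' hss').2.2 a ha t' ht'
      exact (ih' hZt).1 (H t ht)
    · intro H t ht
      obtain ⟨t', ht', hZt⟩ := (hZ s s' hss').2.1 a ha t ht
      exact (ih' hZt).2 (H t' ht')

end Bisimulation

section ArrowUpdate

theorem satList_iff_exists_mem (M : KModel P A) (U : List (Arrow P A)) (a : A) (o o' : ℕ)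
    (s s' : M.World) :
    satList M U a o o' s s' ↔
      ∃ ψ ψ', (a, o, ψ, o', ψ') ∈ U ∧ Form.sat M s ψ ∧ Form.sat M s' ψ' := by
  induction U with
  | nil => simp [satList]
  | cons ar U ih =>
    obtain ⟨b, n, χ, n', χ'⟩ := ar
    simp only [satList, ih, List.mem_cons, Prod.mk.injEq]
    constructor
    · rintro (⟨rfl, rfl, rfl, h, h'⟩ | ⟨ψ, ψ', hmem, h, h'⟩)
      · exact ⟨χ, χ', .inl ⟨rfl, rfl, rfl, rfl, rfl⟩, h, h'⟩
      · exact ⟨ψ, ψ', .inr hmem, h, h'⟩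
    · rintro ⟨ψ, ψ', ⟨rfl, rfl, rfl, rfl, rfl⟩ | hmem, h, h'⟩
      · exact .inl ⟨rfl, rfl, rfl, h, h'⟩
      · exact .inr ⟨ψ, ψ', hmem, h, h'⟩

theorem sat_upd (M : KModel P A) (s : M.World) (U : List (Arrow P A)) (o : ℕ) (φ : Form P A) :
    Form.sat M s (.upd U o φ) ↔ Form.sat (prodModel M U) (s, o) φ := by
  rw [Form.sat]
  rfl

end ArrowUpdate

section ActionToArrows

open Classical in
noncomputable def AModel.toArrows (E : AModel P A) [Fintype E.Action] (c : E.Action → ℕ)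
    (agents : List A) : List (Arrow P A) :=
  ((agents ×ˢ Finset.univ.toList ×ˢ Finset.univ.toList).filter
      fun x => E.rel x.1 x.2.1 x.2.2).map
    fun x => (x.1, c x.2.1, E.pre x.2.1, c x.2.2, E.pre x.2.2)

variable (E : AModel P A) [Fintype E.Action] {c : E.Action → ℕ} (agents : List A)

theorem AModel.mem_toArrows {a : A} {n n' : ℕ} {ψ ψ' : Form P A} :
    (a, n, ψ, n', ψ') ∈ E.toArrows c agents ↔ a ∈ agents ∧
      ∃ e e', E.rel a e e' ∧ n = c e ∧ ψ = E.pre e ∧ n' = c e' ∧ ψ' = E.pre e' := by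
  simp only [AModel.toArrows, List.mem_map, List.mem_filter, List.mem_product,
    Finset.mem_toList, Finset.mem_univ, and_true, decide_eq_true_eq, Prod.mk.injEq,
    Prod.exists]
  constructor
  · rintro ⟨b, e, e', ⟨hb, hr⟩, rfl, rfl, rfl, rfl, rfl⟩
    exact ⟨hb, e, e', hr, rfl, rfl, rfl, rfl⟩
  · rintro ⟨hb, e, e', hr, rfl, rfl, rfl, rfl⟩
    exact ⟨a, e, e', ⟨hb, hr⟩, rfl, rfl, rfl, rfl, rfl⟩

theorem AModel.isBisimOn_toArrows (M : KModel P A) (hc : Function.Injective c) :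
    IsBisimOn {a | a ∈ agents} (actProd M E) (prodModel M (E.toArrows c agents))
      fun x y => y = (x.1.1, c x.1.2) := by
  rintro ⟨⟨t, e⟩, hpre⟩ _ rfl
  refine ⟨fun p => Iff.rfl, ?_, ?_⟩
  · rintro a ha ⟨⟨t', e'⟩, hpre'⟩ ⟨hR, hr⟩
    refine ⟨(t', c e'), ⟨hR, ?_⟩, rfl⟩
    exact (satList_iff_exists_mem ..).2
      ⟨_, _, (E.mem_toArrows agents).2 ⟨ha, e, e', hr, rfl, rfl, rfl, rfl⟩, hpre, hpre'⟩
  · rintro a - ⟨t', n'⟩ ⟨hR, hU⟩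
    obtain ⟨ψ, ψ', hmem, -, hψ'⟩ := (satList_iff_exists_mem ..).1 hU
    obtain ⟨-, e₁, e', hr, he₁, -, rfl, rfl⟩ := (E.mem_toArrows agents).1 hmem
    obtain rfl := hc he₁.symm
    exact ⟨⟨(t', e'), hψ'⟩, ⟨hR, hr⟩, rfl⟩

end ActionToArrows

section ArrowsToAction

open Classical

variable (U : List (Arrow P A))

def Form.literal (b : Bool) (ψ : Form P A) : Form P A := if b then ψ else .neg ψ

theorem sat_literal (M : KModel P A) (t : M.World) (b : Bool) (ψ : Form P A) :
    Form.sat M t (Form.literal b ψ) ↔ decide (Form.sat M t ψ) = b := by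
  cases b <;> simp [Form.literal, Form.sat]

theorem sat_foldr_and {M : KModel P A} {t : M.World} {τ : Form P A} (hτ : Form.sat M t τ)
    (l : List (Form P A)) : Form.sat M t (l.foldr .and τ) ↔ ∀ ψ ∈ l, Form.sat M t ψ := by
  induction l with
  | nil => simpa using hτ
  | cons ψ l ih => simp only [List.foldr_cons, Form.sat, ih, List.forall_mem_cons]

theorem sat_imp_self (M : KModel P A) (t : M.World) (φ : Form P A) :
    Form.sat M t (Form.imp φ φ) := by
  simp [Form.imp, Form.sat]

noncomputable def arrowTruth (M : KModel P A) (t : M.World) :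
    {ar // ar ∈ U} → Bool × Bool :=
  fun ar => (decide (Form.sat M t ar.1.2.2.1), decide (Form.sat M t ar.1.2.2.2.2))

/-- `Form P A` has no constant, so the valid formula `τ` stands for the empty conjunction. -/
def toActionModel (τ : Form P A) (o : ℕ) : AModel P A where
  Action := {n // n ∈ o :: U.map (·.2.2.2.1)} × ({ar // ar ∈ U} → Bool × Bool)
  rel a x y := ∃ ar : {ar // ar ∈ U}, ar.1.1 = a ∧ ar.1.2.1 = x.1 ∧ ar.1.2.2.2.1 = y.1 ∧
    (x.2 ar).1 = true ∧ (y.2 ar).2 = true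
  pre x := (U.attach.map fun ar =>
    .and (.literal (x.2 ar).1 ar.1.2.2.1) (.literal (x.2 ar).2 ar.1.2.2.2.2)).foldr .and τ

instance (τ : Form P A) (o : ℕ) : Finite (toActionModel U τ o).Action := by
  unfold toActionModel
  infer_instance

theorem sat_pre_toActionModel_iff {M : KModel P A} {τ : Form P A} (hτ : ∀ t, Form.sat M t τ)
    (o : ℕ) (t : M.World) (x : (toActionModel U τ o).Action) :
    Form.sat M t ((toActionModel U τ o).pre x) ↔ x.2 = arrowTruth U M t := by
  simp only [toActionModel, sat_foldr_and (hτ t), List.forall_mem_map, List.mem_attach,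
    forall_const, Form.sat, sat_literal, funext_iff, Prod.ext_iff, arrowTruth, eq_comm]

theorem isBisimOn_toActionModel (M : KModel P A) {τ : Form P A} (hτ : ∀ t, Form.sat M t τ)
    (o : ℕ) :
    IsBisimOn Set.univ (actProd M (toActionModel U τ o)) (prodModel M U)
      fun x y => y = (x.1.1, x.1.2.1.1) := by
  rintro ⟨⟨t, n, X⟩, hpre⟩ _ rfl
  obtain rfl := (sat_pre_toActionModel_iff U hτ o t _).1 hpre
  refine ⟨fun p => Iff.rfl, ?_, ?_⟩
  · rintro a - ⟨⟨t', n', X'⟩, hpre'⟩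
      ⟨hR, ⟨⟨b, m, ψ, m', ψ'⟩, hmem⟩, rfl, hm, hm', hψ, hψ'⟩
    obtain rfl := (sat_pre_toActionModel_iff U hτ o t' _).1 hpre'
    refine ⟨(t', n'.1), ⟨hR, (satList_iff_exists_mem ..).2 ⟨ψ, ψ', ?_, ?_, ?_⟩⟩, rfl⟩
    · simp only at hm hm'
      rwa [← hm, ← hm']
    · simpa [arrowTruth] using hψ
    · simpa [arrowTruth] using hψ'
  · rintro a - ⟨t', n'⟩ ⟨hR, hU⟩
    obtain ⟨ψ, ψ', hmem, hψ, hψ'⟩ := (satList_iff_exists_mem ..).1 hU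
    have hn' : n' ∈ o :: U.map (·.2.2.2.1) := List.mem_cons_of_mem _ (List.mem_map_of_mem hmem)
    have hpre' := (sat_pre_toActionModel_iff U hτ o t' (⟨n', hn'⟩, arrowTruth U M t')).2 rfl
    refine ⟨⟨(t', _), hpre'⟩, ⟨hR, ⟨_, hmem⟩, rfl, rfl, rfl, ?_, ?_⟩, rfl⟩
    · simpa [arrowTruth] using hψ
    · simpa [arrowTruth] using hψ'

end ArrowsToAction

/-- for every basic modal formula `φ`, "after all arrow update
models, φ" is equivalent to "after all action models, φ":
`M,s ⊨ [↑]φ` iff `M,s ⊨ [⊗]φ`, for every pointed relational model `(M,s)`. -/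
theorem arbitrary_arrow_iff_arbitrary_action (P A : Type)
    (φ : Form P A) (h : φ.Modal) (M : KModel P A) (s : M.World) :
    (∀ (U : List (Arrow P A)) (o : ℕ), Form.sat M s (.upd U o φ)) ↔
    (∀ (E : AModel P A), Finite E.Action → ∀ e : E.Action, actSat M E s e φ) := by
  constructor
  · intro hU E _ e hpre
    have := Fintype.ofFinite E.Action
    obtain ⟨c, hc⟩ := Countable.exists_injective_nat E.Action
    have hsat := (sat_upd ..).1 (hU (E.toArrows c φ.boxAgents) (c e))
    exact (h.sat_iff_of_isBisimOn (E.isBisimOn_toArrows _ M hc) (fun _ ha => ha) rfl).2 hsat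
  · intro hE U o
    have hτ : ∀ t, Form.sat M t (Form.imp φ φ) := (sat_imp_self M · φ)
    have hpre := (sat_pre_toActionModel_iff U hτ o s (⟨o, List.mem_cons_self⟩, _)).2 rfl
    have hsat := hE _ inferInstance _ hpre
    exact (sat_upd ..).2
      ((h.sat_iff_of_isBisimOn (isBisimOn_toActionModel U M hτ o) (by simp) rfl).1 hsat)

end AAUML
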